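/- (Spherical subalgebra, Proposition 12(2): e_0 H_κ e_0 ≅ ℂ[z,∂_κ]^{ℤ/lℤ} = ℂ[z^l, z∂_κ, ∂_κ^l].) The set e_0 H_κ e_0 = {e_0 ∘ h ∘ e_0 : h ∈ H_κ} coincides with the ℂ-linear span of e_0 together with all finite products of the three operators e_0 ∘ Z^l ∘ e_0, e_0 ∘ Z ∘ ∂_κ ∘ e_0 and e_0 ∘ ∂_κ^l ∘ e_0. -/

import Mathlib

open LaurentPolynomial

noncomputable section

/-- The ℂ-algebra `L = ℂ[z, z⁻¹]` of Laurent polynomials (`T n` is the monomial `zⁿ`). -/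
abbrev Lau : Type := LaurentPolynomial ℂ

/-- Multiplication by `z`, as a ℂ-linear endomorphism of `L`. -/
def Zmul : Module.End ℂ Lau := LinearMap.mulLeft ℂ (T 1)

/-- Multiplication by `z⁻¹`, as a ℂ-linear endomorphism of `L`. -/
def Zinv : Module.End ℂ Lau := LinearMap.mulLeft ℂ (T (-1))

/-- The ℂ-algebra automorphism `Γ` of `L` determined by `Γ(z) = ζ⁻¹ z`,
i.e. `Γ(zⁿ) = ζ⁻ⁿ zⁿ`. -/
def Gam (ζ : ℂ) : Module.End ℂ Lau :=
  (Finsupp.lsum ℂ fun n : ℤ => LinearMap.toSpanSingleton ℂ Lau ((ζ⁻¹ ^ n) • T n)) ∘ₗ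
    (AddMonoidAlgebra.coeffLinearEquiv ℂ : Lau ≃ₗ[ℂ] (ℤ →₀ ℂ)).toLinearMap

/-- The formal derivative `d/dz : zⁿ ↦ n zⁿ⁻¹` on `L`. -/
def Deriv : Module.End ℂ Lau :=
  (Finsupp.lsum ℂ fun n : ℤ => LinearMap.toSpanSingleton ℂ Lau ((n : ℂ) • T (n - 1))) ∘ₗ
    (AddMonoidAlgebra.coeffLinearEquiv ℂ : Lau ≃ₗ[ℂ] (ℤ →₀ ℂ)).toLinearMap

/-- The idempotent `e_i = (1/l)·Σ_{j=0}^{l−1} ζ^{ij} Γ^j` of `ℂ(ℤ/lℤ)`, regarded as an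
endomorphism of `L`. -/
def eIdem (l : ℕ) (ζ : ℂ) (i : Fin l) : Module.End ℂ Lau :=
  (l : ℂ)⁻¹ • ∑ j ∈ Finset.range l, (ζ ^ ((i : ℕ) * j)) • (Gam ζ) ^ j

/-- The Dunkl operator `∂_κ = d/dz + l z⁻¹ Σ_{i=0}^{l−1} κ_i e_i` (where `κ_0 = 0`). -/
def Dunkl (l : ℕ) (ζ : ℂ) (κ : Fin l → ℂ) : Module.End ℂ Lau :=
  Deriv + (l : ℂ) • (Zinv * ∑ i : Fin l, κ i • eIdem l ζ i)

/-- The rational Cherednik algebra `H_κ` of type `ℤ/lℤ`: the unital ℂ-subalgebra of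
`End_ℂ(L)` generated by `Z`, `Γ` and `∂_κ`. -/
def Cher (l : ℕ) (ζ : ℂ) (κ : Fin l → ℂ) : Subalgebra ℂ (Module.End ℂ Lau) :=
  Algebra.adjoin ℂ {Zmul, Gam ζ, Dunkl l ζ κ}

/-!
Every operator in sight is a weighted shift `zⁿ ↦ f(n) z^(n+d)` of the monomial basis: `Z`, `Γ`,
the idempotents `e_i` (by orthogonality of the characters of `ℤ/lℤ`) and `∂_κ`, whose weight is
`n + l κ_(n mod l)`. The span of the PBW monomials `Z^a ψ ∂_κ^b`, with `ψ` an `l`-periodic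
diagonal operator, contains `1` and is stable under right multiplication by `Z`, `Γ` and `∂_κ`
(the commutator `[∂_κ^b, Z]` is again periodic times `∂_κ^(b-1)`), so it contains `H_κ`.
Sandwiched between two copies of `e_0`, such a monomial vanishes unless `l ∣ a - b`; otherwise it
is a multiple of `(e_0 Z^l e_0)^m · q` or `q · (e_0 ∂_κ^l e_0)^m`, where `q` acts on the
`zⁿ` with `l ∣ n` by a polynomial in `n`. As `κ_0 = 0`, `e_0 Z ∂_κ e_0` acts on these `zⁿ` by
`n`, so `q` is a polynomial in it and `e_0`.
-/

section CornerAlgebra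

open scoped Pointwise

variable {R A : Type*} [CommSemiring R] [Semiring A] [Algebra R A]

theorem Algebra.adjoin_le_of_one_mem_of_mul_mem {s : Set A} {V : Submodule R A} (h1 : 1 ∈ V)
    (hs : ∀ x ∈ s, ∀ v ∈ V, v * x ∈ V) : Subalgebra.toSubmodule (Algebra.adjoin R s) ≤ V := by
  rw [Algebra.adjoin_eq_span, Submodule.span_le]
  intro x hx
  induction hx using Submonoid.closure_induction_right with
  | one => exact h1
  | mul_right x _ y hy hx => exact hs y hy x hx

theorem IsIdempotentElem.mul_mem_span_union_closure {e : A} (he : IsIdempotentElem e)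
    {G : Set A} (hG : ∀ g ∈ G, ∃ h, g = e * h * e) {x y : A}
    (hx : x ∈ Submodule.span R ({e} ∪ Subsemigroup.closure G : Set A))
    (hy : y ∈ Submodule.span R ({e} ∪ Subsemigroup.closure G : Set A)) :
    x * y ∈ Submodule.span R ({e} ∪ Subsemigroup.closure G : Set A) := by
  have absorb : ∀ g ∈ Subsemigroup.closure G, e * g = g ∧ g * e = g := by
    intro g hg
    induction hg using Subsemigroup.closure_induction with
    | mem g hg =>
      obtain ⟨h, rfl⟩ := hG g hg
      constructor <;> simp only [mul_assoc, he.eq, ← mul_assoc e e]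
    | mul g g' _ _ hg hg' => exact ⟨by rw [← mul_assoc, hg.1], by rw [mul_assoc, hg'.2]⟩
  have hS : ({e} ∪ Subsemigroup.closure G : Set A) * ({e} ∪ Subsemigroup.closure G : Set A) ⊆
      ({e} ∪ Subsemigroup.closure G : Set A) := by
    rw [Set.mul_subset_iff]
    rintro a (rfl | ha) b (rfl | hb)
    · exact .inl he.eq
    · exact .inr (by rwa [(absorb b hb).1])
    · exact .inr (by rwa [(absorb a ha).2])
    · exact .inr (mul_mem ha hb)
  have hxy := Submodule.mul_mem_mul hx hy
  rw [Submodule.span_mul_span] at hxy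
  exact Submodule.span_mono hS hxy

theorem IsIdempotentElem.span_union_closure_subset {e : A} (he : IsIdempotentElem e)
    {H : Subalgebra R A} (heH : e ∈ H) {G : Set A} (hG : ∀ g ∈ G, ∃ h ∈ H, g = e * h * e) :
    (Submodule.span R ({e} ∪ Subsemigroup.closure G : Set A) : Set A) ⊆
      {w | ∃ h ∈ H, w = e * h * e} := by
  let corner : Submodule R A :=
    (Subalgebra.toSubmodule H).map (LinearMap.mulLeft R e ∘ₗ LinearMap.mulRight R e)
  have mem_corner {w : A} : w ∈ corner ↔ ∃ h ∈ H, w = e * h * e := by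
    simp only [corner, Submodule.mem_map, LinearMap.comp_apply, LinearMap.mulLeft_apply,
      LinearMap.mulRight_apply, Subalgebra.mem_toSubmodule, ← mul_assoc, eq_comm (a := w)]
  have closure_le : (Subsemigroup.closure G : Set A) ⊆ corner := by
    intro g hg
    induction hg using Subsemigroup.closure_induction with
    | mem g hg => exact mem_corner.2 (hG g hg)
    | mul g g' _ _ hg hg' =>
      obtain ⟨h, hh, rfl⟩ := mem_corner.1 hg
      obtain ⟨h', hh', rfl⟩ := mem_corner.1 hg'
      exact mem_corner.2 ⟨h * e * h', mul_mem (mul_mem hh heH) hh', by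
        simp only [mul_assoc, he.eq, ← mul_assoc e e]⟩
  have e_mem : e ∈ corner := mem_corner.2 ⟨1, one_mem H, by rw [mul_one, he.eq]⟩
  intro w hw
  exact mem_corner.1 (Submodule.span_le.2 (Set.union_subset (by simpa using e_mem) closure_le) hw)

end CornerAlgebra

namespace LaurentPolynomial

variable {R : Type*} [CommSemiring R]

theorem linearMap_ext_T {M : Type*} [AddCommMonoid M] [Module R M] {f g : R[T;T⁻¹] →ₗ[R] M}
    (h : ∀ n, f (T n) = g (T n)) : f = g :=
  LinearMap.ext fun p => p.induction_on' (fun p q hp hq => by rw [map_add, map_add, hp, hq])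
    fun n a => by rw [← smul_eq_C_mul, map_smul, map_smul, h]

theorem lsum_comp_coeffLinearEquiv_T (v : ℤ → R[T;T⁻¹]) (n : ℤ) :
    ((Finsupp.lsum R fun m => LinearMap.toSpanSingleton R R[T;T⁻¹] (v m)) ∘ₗ
      (AddMonoidAlgebra.coeffLinearEquiv R : R[T;T⁻¹] ≃ₗ[R] (ℤ →₀ R)).toLinearMap) (T n) = v n := by
  have hT : (AddMonoidAlgebra.coeffLinearEquiv R : R[T;T⁻¹] ≃ₗ[R] (ℤ →₀ R)) (T n) =
      Finsupp.single n 1 := rfl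
  rw [LinearMap.comp_apply, LinearEquiv.coe_coe, hT, Finsupp.lsum_single,
    LinearMap.toSpanSingleton_apply, one_smul]

def weightedShift (d : ℤ) (f : ℤ → R) : Module.End R R[T;T⁻¹] :=
  (Finsupp.lsum R fun n => LinearMap.toSpanSingleton R R[T;T⁻¹] (f n • T (n + d))) ∘ₗ
    (AddMonoidAlgebra.coeffLinearEquiv R : R[T;T⁻¹] ≃ₗ[R] (ℤ →₀ R)).toLinearMap

@[simp]
theorem weightedShift_T (d : ℤ) (f : ℤ → R) (n : ℤ) :
    weightedShift d f (T n) = f n • T (n + d) :=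
  lsum_comp_coeffLinearEquiv_T _ n

theorem weightedShift_congr {d d' : ℤ} {f g : ℤ → R} (hd : d = d') (hfg : ∀ n, f n = g n) :
    weightedShift d f = weightedShift d' g := by
  rw [hd, funext hfg]

theorem weightedShift_mul (d e : ℤ) (f g : ℤ → R) :
    weightedShift d f * weightedShift e g = weightedShift (d + e) fun n => f (n + e) * g n :=
  linearMap_ext_T fun n => by
    rw [Module.End.mul_apply, weightedShift_T, map_smul, weightedShift_T, weightedShift_T,
      smul_smul, mul_comm, add_assoc, add_comm e]

theorem weightedShift_add (d : ℤ) (f g : ℤ → R) :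
    weightedShift d f + weightedShift d g = weightedShift d (f + g) :=
  linearMap_ext_T fun n => by simp [add_smul]

theorem smul_weightedShift (c : R) (d : ℤ) (f : ℤ → R) :
    c • weightedShift d f = weightedShift d (c • f) :=
  linearMap_ext_T fun n => by simp [smul_smul]

theorem weightedShift_zero_right (d : ℤ) : weightedShift d (0 : ℤ → R) = 0 :=
  linearMap_ext_T fun n => by simp

theorem weightedShift_zero_one : weightedShift 0 (1 : ℤ → R) = 1 :=
  linearMap_ext_T fun n => by simp

theorem weightedShift_sum {ι : Type*} (s : Finset ι) (d : ℤ) (f : ι → ℤ → R) :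
    ∑ i ∈ s, weightedShift d (f i) = weightedShift d (∑ i ∈ s, f i) :=
  linearMap_ext_T fun n => by simp [Finset.sum_smul]

theorem weightedShift_zero_pow (f : ℤ → R) (j : ℕ) :
    weightedShift 0 f ^ j = weightedShift 0 (f ^ j) := by
  induction j with
  | zero => rw [pow_zero, pow_zero, weightedShift_zero_one]
  | succ j ih =>
    rw [pow_succ, ih, weightedShift_mul, pow_succ]
    simp only [add_zero]
    rfl

end LaurentPolynomial

theorem IsPrimitiveRoot.sum_range_zpow_pow {K : Type*} [Field K] {ζ : K} {k : ℕ}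
    (hζ : IsPrimitiveRoot ζ k) (m : ℤ) :
    ∑ j ∈ Finset.range k, (ζ ^ m) ^ j = if (k : ℤ) ∣ m then (k : K) else 0 := by
  split_ifs with h
  · simp [(hζ.zpow_eq_one_iff_dvd m).2 h]
  · have hne : ζ ^ m ≠ 1 := fun h1 => h ((hζ.zpow_eq_one_iff_dvd m).1 h1)
    rw [geom_sum_eq hne, ← zpow_natCast, ← zpow_mul, mul_comm, zpow_mul, zpow_natCast,
      hζ.pow_eq_one, one_zpow, sub_self, zero_div]

theorem IsPrimitiveRoot.periodic_inv_zpow {K : Type*} [Field K] {ζ : K} {k : ℕ} [NeZero k]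
    (hζ : IsPrimitiveRoot ζ k) : Function.Periodic (fun n : ℤ => ζ⁻¹ ^ n) k := fun n => by
  dsimp only
  rw [zpow_add₀ (inv_ne_zero (hζ.ne_zero (NeZero.ne k))), zpow_natCast, inv_pow, hζ.pow_eq_one,
    inv_one, mul_one]

namespace Cherednik

open Finset Function

variable {l : ℕ} {ζ : ℂ} {κ : Fin l → ℂ}

theorem Zmul_eq : Zmul = weightedShift 1 1 :=
  linearMap_ext_T fun n => by
    rw [Zmul, LinearMap.mulLeft_apply, weightedShift_T, Pi.one_apply, one_smul, ← T_add, add_comm]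

theorem Zinv_eq : Zinv = weightedShift (-1) 1 :=
  linearMap_ext_T fun n => by
    rw [Zinv, LinearMap.mulLeft_apply, weightedShift_T, Pi.one_apply, one_smul, ← T_add, add_comm]

theorem Gam_eq (ζ : ℂ) : Gam ζ = weightedShift 0 fun n => ζ⁻¹ ^ n :=
  linearMap_ext_T fun n => by rw [Gam, lsum_comp_coeffLinearEquiv_T, weightedShift_T, add_zero]

theorem Deriv_eq : Deriv = weightedShift (-1) fun n => (n : ℂ) :=
  linearMap_ext_T fun n => by
    rw [Deriv, lsum_comp_coeffLinearEquiv_T, weightedShift_T, sub_eq_add_neg]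

theorem Zmul_pow (a : ℕ) : Zmul ^ a = weightedShift a 1 := by
  induction a with
  | zero => rw [pow_zero, Nat.cast_zero, weightedShift_zero_one]
  | succ a ih =>
    rw [pow_succ, ih, Zmul_eq, weightedShift_mul]
    exact weightedShift_congr (by push_cast; rfl) fun n => mul_one 1

variable (l) in
def divIndicator (n : ℤ) : ℂ := if (l : ℤ) ∣ n then 1 else 0

theorem divIndicator_add_of_dvd {m : ℤ} (hm : (l : ℤ) ∣ m) (n : ℤ) :
    divIndicator l (n + m) = divIndicator l n := by
  simp only [divIndicator, (dvd_add_left hm).eq]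

theorem eIdem_eq (hp : IsPrimitiveRoot ζ l) (i : Fin l) :
    eIdem l ζ i = weightedShift 0 fun n => divIndicator l (n - i) := by
  have hterm (j : ℕ) : ζ ^ ((i : ℕ) * j) • Gam ζ ^ j =
      weightedShift 0 fun n => (ζ ^ ((i : ℤ) - n)) ^ j := by
    rw [Gam_eq, weightedShift_zero_pow, smul_weightedShift]
    refine weightedShift_congr rfl fun n => ?_
    change ζ ^ ((i : ℕ) * j) * (ζ⁻¹ ^ n) ^ j = _
    rw [zpow_sub₀ (hp.ne_zero i.pos.ne'), div_pow, pow_mul, inv_zpow, inv_pow, div_eq_mul_inv,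
      zpow_natCast]
  rw [eIdem, sum_congr rfl fun j _ => hterm j, weightedShift_sum, smul_weightedShift]
  refine weightedShift_congr rfl fun n => ?_
  simp only [Pi.smul_apply, Finset.sum_apply, hp.sum_range_zpow_pow, divIndicator,
    dvd_sub_comm (a := (l : ℤ)) (b := n), smul_eq_mul]
  split_ifs <;> simp [i.pos.ne']

theorem divIndicator_mul_self (n : ℤ) : divIndicator l n * divIndicator l n = divIndicator l n := by
  unfold divIndicator
  split_ifs <;> simp

theorem divIndicator_mul_congr {f g : ℤ → ℂ} (h : ∀ n, (l : ℤ) ∣ n → f n = g n) (n : ℤ) :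
    divIndicator l n * f n = divIndicator l n * g n := by
  unfold divIndicator
  split_ifs with hn
  · rw [h n hn]
  · simp

variable (l) in
def dunklWeight (κ : Fin l → ℂ) (n : ℤ) : ℂ :=
  n + l * ∑ i, κ i * divIndicator l (n - i)

variable (l) in
def dunklPowWeight (κ : Fin l → ℂ) (b : ℕ) (n : ℤ) : ℂ :=
  ∏ k ∈ range b, dunklWeight l κ (n - k)

theorem Dunkl_eq (hp : IsPrimitiveRoot ζ l) :
    Dunkl l ζ κ = weightedShift (-1) (dunklWeight l κ) := by
  have hsum : ∑ i, κ i • eIdem l ζ i =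
      weightedShift 0 fun n => ∑ i, κ i * divIndicator l (n - i) := by
    simp only [eIdem_eq hp, smul_weightedShift, weightedShift_sum]
    exact weightedShift_congr rfl fun n => by simp
  rw [Dunkl, Deriv_eq, Zinv_eq, hsum, weightedShift_mul, add_zero, smul_weightedShift,
    weightedShift_add]
  exact weightedShift_congr rfl fun n => by simp [dunklWeight]

theorem dunklWeight_add_of_dvd {m : ℤ} (hm : (l : ℤ) ∣ m) (n : ℤ) :
    dunklWeight l κ (n + m) = dunklWeight l κ n + m := by
  simp only [dunklWeight, add_sub_right_comm, divIndicator_add_of_dvd hm]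
  push_cast
  ring

theorem dunklWeight_zero [NeZero l] (hκ0 : κ 0 = 0) : dunklWeight l κ 0 = 0 := by
  rw [dunklWeight, sum_eq_single 0]
  · simp [hκ0]
  · intro i _ hi
    have : ¬ (l : ℤ) ∣ (0 - i) := by
      rw [zero_sub, dvd_neg, Int.natCast_dvd_natCast]
      exact fun h => hi (Fin.ext (Nat.eq_zero_of_dvd_of_lt h i.isLt))
    rw [divIndicator, if_neg this, mul_zero]
  · simp

theorem dunklPowWeight_zero : dunklPowWeight l κ 0 = 1 := by
  funext n
  simp [dunklPowWeight]

theorem dunklPowWeight_succ (b : ℕ) (n : ℤ) :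
    dunklPowWeight l κ (b + 1) n = dunklPowWeight l κ b n * dunklWeight l κ (n - b) :=
  prod_range_succ _ b

theorem dunklPowWeight_succ' (b : ℕ) (n : ℤ) :
    dunklPowWeight l κ (b + 1) n = dunklWeight l κ n * dunklPowWeight l κ b (n - 1) := by
  rw [dunklPowWeight, prod_range_succ', Nat.cast_zero, sub_zero, mul_comm, dunklPowWeight]
  congr 1
  refine prod_congr rfl fun k _ => ?_
  push_cast
  ring_nf

theorem dunklPowWeight_add (q p : ℕ) (n : ℤ) :
    dunklPowWeight l κ (q + p) n = dunklPowWeight l κ q n * dunklPowWeight l κ p (n - q) := by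
  rw [dunklPowWeight, prod_range_add]
  congr 1
  refine prod_congr rfl fun k _ => ?_
  push_cast
  ring_nf

theorem dunklPowWeight_succ_add_one (b : ℕ) (n : ℤ) :
    dunklPowWeight l κ (b + 1) (n + 1) = dunklPowWeight l κ (b + 1) n +
      (dunklWeight l κ (n + 1) - dunklWeight l κ (n - b)) * dunklPowWeight l κ b n := by
  rw [dunklPowWeight_succ', add_sub_cancel_right, dunklPowWeight_succ]
  ring

theorem Dunkl_pow (hp : IsPrimitiveRoot ζ l) (b : ℕ) :
    Dunkl l ζ κ ^ b = weightedShift (-b) (dunklPowWeight l κ b) := by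
  induction b with
  | zero => rw [pow_zero, dunklPowWeight_zero, Nat.cast_zero, neg_zero, weightedShift_zero_one]
  | succ b ih =>
    rw [pow_succ', ih, Dunkl_eq hp, weightedShift_mul]
    refine weightedShift_congr (by push_cast; ring) fun n => ?_
    rw [dunklPowWeight_succ, mul_comm, sub_eq_add_neg]

theorem periodic_dunklWeight_sub (s t : ℤ) :
    Periodic (fun n => dunklWeight l κ (n + s) - dunklWeight l κ (n - t)) l := fun n => by
  dsimp only
  rw [add_right_comm, show n + l - t = n - t + l by ring, dunklWeight_add_of_dvd (dvd_refl _),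
    dunklWeight_add_of_dvd (dvd_refl _), add_sub_add_right_eq_sub]

variable (l κ) in
/-- In operator terms this is `Z^a ∘ ψ(· + b) ∘ ∂_κ^b`, a periodic `ψ` acting diagonally on
monomials. -/
def pbwMonomial (a b : ℕ) (ψ : ℤ → ℂ) : Module.End ℂ Lau :=
  weightedShift (a - b) fun n => ψ n * dunklPowWeight l κ b n

variable (l κ) in
def pbwSpan : Submodule ℂ (Module.End ℂ Lau) :=
  Submodule.span ℂ {x | ∃ (a b : ℕ) (ψ : ℤ → ℂ), Periodic ψ l ∧ pbwMonomial l κ a b ψ = x}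

theorem pbwMonomial_mem_pbwSpan {ψ : ℤ → ℂ} (hψ : Periodic ψ l) (a b : ℕ) :
    pbwMonomial l κ a b ψ ∈ pbwSpan l κ :=
  Submodule.subset_span ⟨a, b, ψ, hψ, rfl⟩

theorem one_mem_pbwSpan : 1 ∈ pbwSpan l κ := by
  have h1 := pbwMonomial_mem_pbwSpan (κ := κ) (ψ := fun _ => 1) (fun _ => rfl) 0 0
  rw [pbwMonomial, dunklPowWeight_zero, sub_self] at h1
  simpa only [one_mul, weightedShift_zero_one] using h1

theorem mul_mem_pbwSpan {x : Module.End ℂ Lau}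
    (hx : ∀ (a b : ℕ) (ψ : ℤ → ℂ), Periodic ψ l → pbwMonomial l κ a b ψ * x ∈ pbwSpan l κ)
    {v : Module.End ℂ Lau} (hv : v ∈ pbwSpan l κ) : v * x ∈ pbwSpan l κ := by
  induction hv using Submodule.span_induction with
  | mem m hm =>
    obtain ⟨a, b, ψ, hψ, rfl⟩ := hm
    exact hx a b ψ hψ
  | zero => simp
  | add u w _ _ hu hw => simpa only [add_mul] using add_mem hu hw
  | smul c u _ hu => simpa only [smul_mul_assoc] using Submodule.smul_mem _ c hu

theorem pbwMonomial_mul_weightedShift_zero (a b : ℕ) (ψ γ : ℤ → ℂ) :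
    pbwMonomial l κ a b ψ * weightedShift 0 γ = pbwMonomial l κ a b (ψ * γ) := by
  rw [pbwMonomial, pbwMonomial, weightedShift_mul, add_zero]
  refine weightedShift_congr rfl fun n => ?_
  rw [add_zero, Pi.mul_apply]
  ring

theorem pbwMonomial_mul_Dunkl (hp : IsPrimitiveRoot ζ l) (a b : ℕ) (ψ : ℤ → ℂ) :
    pbwMonomial l κ a b ψ * Dunkl l ζ κ = pbwMonomial l κ a (b + 1) fun n => ψ (n - 1) := by
  rw [Dunkl_eq hp, pbwMonomial, pbwMonomial, weightedShift_mul]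
  refine weightedShift_congr (by push_cast; ring) fun n => ?_
  rw [dunklPowWeight_succ', ← sub_eq_add_neg]
  ring

theorem pbwMonomial_mul_Zmul_mem {ψ : ℤ → ℂ} (hψ : Periodic ψ l) (a b : ℕ) :
    pbwMonomial l κ a b ψ * Zmul ∈ pbwSpan l κ := by
  rw [Zmul_eq, pbwMonomial, weightedShift_mul]
  cases b with
  | zero =>
    convert pbwMonomial_mem_pbwSpan (κ := κ) (hψ.add_const 1) (a + 1) 0 using 1
    rw [pbwMonomial, dunklPowWeight_zero]
    exact weightedShift_congr (by push_cast; ring) fun n => by simp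
  | succ b =>
    have hd : ((a : ℤ) - (b + 1 : ℕ)) + 1 = (a + 1 : ℕ) - (b + 1 : ℕ) := by push_cast; ring
    have hd' : ((a : ℤ) - (b + 1 : ℕ)) + 1 = a - b := by push_cast; ring
    have hsplit : (weightedShift ((a : ℤ) - (b + 1 : ℕ) + 1) fun n =>
          ψ (n + 1) * dunklPowWeight l κ (b + 1) (n + 1) * (1 : ℤ → ℂ) n) =
        pbwMonomial l κ (a + 1) (b + 1) (fun n => ψ (n + 1)) +
          pbwMonomial l κ a b fun n =>
            ψ (n + 1) * (dunklWeight l κ (n + 1) - dunklWeight l κ (n - b)) := by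
      rw [pbwMonomial, pbwMonomial, ← hd, ← hd', weightedShift_add]
      refine weightedShift_congr rfl fun n => ?_
      simp only [Pi.one_apply, mul_one, Pi.add_apply, dunklPowWeight_succ_add_one]
      ring
    rw [hsplit]
    exact add_mem (pbwMonomial_mem_pbwSpan (hψ.add_const 1) _ _)
      (pbwMonomial_mem_pbwSpan ((hψ.add_const 1).mul (periodic_dunklWeight_sub 1 b)) _ _)

theorem Cher_le_pbwSpan [NeZero l] (hp : IsPrimitiveRoot ζ l) :
    Subalgebra.toSubmodule (Cher l ζ κ) ≤ pbwSpan l κ := by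
  refine Algebra.adjoin_le_of_one_mem_of_mul_mem one_mem_pbwSpan ?_
  rintro x (rfl | rfl | rfl) v hv <;> refine mul_mem_pbwSpan (fun a b ψ hψ => ?_) hv
  · exact pbwMonomial_mul_Zmul_mem hψ a b
  · rw [Gam_eq, pbwMonomial_mul_weightedShift_zero]
    exact pbwMonomial_mem_pbwSpan (hψ.mul hp.periodic_inv_zpow) a b
  · rw [pbwMonomial_mul_Dunkl hp]
    exact pbwMonomial_mem_pbwSpan (hψ.sub_const 1) a (b + 1)

section Spherical

variable [NeZero l]

theorem eIdem_zero_eq (hp : IsPrimitiveRoot ζ l) :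
    eIdem l ζ 0 = weightedShift 0 (divIndicator l) := by
  rw [eIdem_eq hp]
  simp

theorem isIdempotentElem_eIdem_zero (hp : IsPrimitiveRoot ζ l) :
    IsIdempotentElem (eIdem l ζ 0) := by
  rw [IsIdempotentElem, eIdem_zero_eq hp, weightedShift_mul, add_zero]
  simp only [add_zero, divIndicator_mul_self]

theorem eIdem_zero_mem_Cher : eIdem l ζ 0 ∈ Cher l ζ κ :=
  Subalgebra.smul_mem _ (Subalgebra.sum_mem _ fun j _ => Subalgebra.smul_mem _
    (Subalgebra.pow_mem _ (Algebra.subset_adjoin (by simp)) j) _) _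

theorem eIdem_zero_mul_weightedShift_mul (hp : IsPrimitiveRoot ζ l) (d : ℤ) (f : ℤ → ℂ) :
    eIdem l ζ 0 * weightedShift d f * eIdem l ζ 0 =
      weightedShift d fun n => divIndicator l (n + d) * f n * divIndicator l n := by
  rw [eIdem_zero_eq hp, weightedShift_mul, weightedShift_mul, zero_add, add_zero]
  simp only [add_zero]

variable (l ζ κ) in
def sphericalSpan : Submodule ℂ (Module.End ℂ Lau) :=
  Submodule.span ℂ ({eIdem l ζ 0} ∪
    (Subsemigroup.closure
      {eIdem l ζ 0 * Zmul ^ l * eIdem l ζ 0,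
       eIdem l ζ 0 * Zmul * Dunkl l ζ κ * eIdem l ζ 0,
       eIdem l ζ 0 * (Dunkl l ζ κ) ^ l * eIdem l ζ 0} : Set (Module.End ℂ Lau)))

theorem mul_mem_sphericalSpan (hp : IsPrimitiveRoot ζ l) {x y : Module.End ℂ Lau}
    (hx : x ∈ sphericalSpan l ζ κ) (hy : y ∈ sphericalSpan l ζ κ) : x * y ∈ sphericalSpan l ζ κ :=
  (isIdempotentElem_eIdem_zero hp).mul_mem_span_union_closure
    (by
      rintro g (rfl | rfl | rfl)
      exacts [⟨_, rfl⟩, ⟨Zmul * Dunkl l ζ κ, by rw [mul_assoc _ Zmul]⟩, ⟨_, rfl⟩]) hx hy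

theorem weightedShift_zero_divIndicator_mem (hp : IsPrimitiveRoot ζ l) :
    weightedShift 0 (divIndicator l) ∈ sphericalSpan l ζ κ :=
  eIdem_zero_eq hp ▸ Submodule.subset_span (.inl rfl)

theorem generator_mem_sphericalSpan {g : Module.End ℂ Lau}
    (hg : g ∈ ({eIdem l ζ 0 * Zmul ^ l * eIdem l ζ 0,
       eIdem l ζ 0 * Zmul * Dunkl l ζ κ * eIdem l ζ 0,
       eIdem l ζ 0 * (Dunkl l ζ κ) ^ l * eIdem l ζ 0} : Set (Module.End ℂ Lau))) :
    g ∈ sphericalSpan l ζ κ :=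
  Submodule.subset_span (.inr (Subsemigroup.subset_closure hg))

theorem weightedShift_period_divIndicator_mem (hp : IsPrimitiveRoot ζ l) :
    weightedShift l (divIndicator l) ∈ sphericalSpan l ζ κ := by
  convert generator_mem_sphericalSpan (.inl rfl) using 1
  rw [Zmul_pow, eIdem_zero_mul_weightedShift_mul hp]
  refine weightedShift_congr rfl fun n => ?_
  rw [divIndicator_add_of_dvd (dvd_refl _), Pi.one_apply, mul_one, divIndicator_mul_self]

theorem weightedShift_zero_divIndicator_mul_cast_mem (hp : IsPrimitiveRoot ζ l) (hκ0 : κ 0 = 0) :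
    (weightedShift 0 fun n => divIndicator l n * n) ∈ sphericalSpan l ζ κ := by
  have hweight (n : ℤ) (hn : (l : ℤ) ∣ n) : dunklWeight l κ n = n := by
    simpa [dunklWeight_zero hκ0] using dunklWeight_add_of_dvd (κ := κ) hn 0
  convert generator_mem_sphericalSpan (.inr (.inl rfl)) using 1
  rw [mul_assoc _ Zmul, Zmul_eq, Dunkl_eq hp, weightedShift_mul,
    eIdem_zero_mul_weightedShift_mul hp]
  refine weightedShift_congr (by ring) fun n => ?_
  rw [add_neg_cancel, add_zero, Pi.one_apply, one_mul, mul_right_comm, divIndicator_mul_self,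
    divIndicator_mul_congr hweight]

theorem weightedShift_neg_period_dunklPowWeight_mem (hp : IsPrimitiveRoot ζ l) :
    (weightedShift (-l) fun n => divIndicator l n * dunklPowWeight l κ l n) ∈
      sphericalSpan l ζ κ := by
  convert generator_mem_sphericalSpan (.inr (.inr rfl)) using 1
  rw [Dunkl_pow hp, eIdem_zero_mul_weightedShift_mul hp]
  refine weightedShift_congr rfl fun n => ?_
  rw [divIndicator_add_of_dvd (dvd_neg.2 (dvd_refl _)), mul_right_comm, divIndicator_mul_self]

theorem weightedShift_period_mul_divIndicator_mem (hp : IsPrimitiveRoot ζ l) (m : ℕ) :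
    weightedShift (l * m) (divIndicator l) ∈ sphericalSpan l ζ κ := by
  induction m with
  | zero => simpa using weightedShift_zero_divIndicator_mem hp
  | succ m ih =>
    convert mul_mem_sphericalSpan hp ih (weightedShift_period_divIndicator_mem hp) using 1
    rw [weightedShift_mul]
    refine weightedShift_congr (by push_cast; ring) fun n => ?_
    rw [divIndicator_add_of_dvd (dvd_refl _), divIndicator_mul_self]

theorem weightedShift_neg_period_mul_dunklPowWeight_mem (hp : IsPrimitiveRoot ζ l) (m : ℕ) :
    (weightedShift (-(l * m)) fun n => divIndicator l n * dunklPowWeight l κ (l * m) n) ∈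
      sphericalSpan l ζ κ := by
  induction m with
  | zero =>
    simpa [dunklPowWeight_zero] using weightedShift_zero_divIndicator_mem hp
  | succ m ih =>
    convert mul_mem_sphericalSpan hp ih (weightedShift_neg_period_dunklPowWeight_mem hp) using 1
    rw [weightedShift_mul]
    refine weightedShift_congr (by push_cast; ring) fun n => ?_
    rw [show l * (m + 1) = l + l * m by ring, dunklPowWeight_add,
      divIndicator_add_of_dvd (dvd_neg.2 (dvd_refl _)) n, ← sub_eq_add_neg]
    linear_combination (-(dunklPowWeight l κ l n * dunklPowWeight l κ (l * m) (n - l))) *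
      divIndicator_mul_self (l := l) n

theorem weightedShift_zero_dunklPowWeight_mem (hp : IsPrimitiveRoot ζ l) (hκ0 : κ 0 = 0)
    (b : ℕ) : (weightedShift 0 fun n => divIndicator l n * dunklPowWeight l κ b n) ∈
      sphericalSpan l ζ κ := by
  induction b with
  | zero =>
    simpa [dunklPowWeight_zero] using weightedShift_zero_divIndicator_mem hp
  | succ b ih =>
    have hfactor := add_mem (weightedShift_zero_divIndicator_mul_cast_mem hp hκ0)
      (Submodule.smul_mem _ (dunklWeight l κ (-b)) (weightedShift_zero_divIndicator_mem hp))
    rw [smul_weightedShift, weightedShift_add] at hfactor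
    convert mul_mem_sphericalSpan hp ih hfactor using 1
    rw [weightedShift_mul]
    refine weightedShift_congr rfl fun n => ?_
    have hweight := divIndicator_mul_congr (f := fun n => dunklWeight l κ (n - b))
      (g := fun n => dunklWeight l κ (-b) + n)
      (fun n hn => by rw [sub_eq_neg_add, dunklWeight_add_of_dvd hn]) n
    simp only [add_zero, Pi.add_apply, Pi.smul_apply, smul_eq_mul, dunklPowWeight_succ] at *
    linear_combination dunklPowWeight l κ b n * hweight -
      (dunklPowWeight l κ b n * (n + dunklWeight l κ (-b))) * divIndicator_mul_self (l := l) n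

theorem weightedShift_sub_dunklPowWeight_mem (hp : IsPrimitiveRoot ζ l) (hκ0 : κ 0 = 0) {a b : ℕ}
    (hab : (l : ℤ) ∣ a - b) :
    (weightedShift (a - b) fun n => divIndicator l n * dunklPowWeight l κ b n) ∈
      sphericalSpan l ζ κ := by
  obtain ⟨k, hk⟩ := hab
  rcases Int.eq_nat_or_neg k with ⟨m, rfl | rfl⟩
  · convert mul_mem_sphericalSpan hp (weightedShift_period_mul_divIndicator_mem hp m)
      (weightedShift_zero_dunklPowWeight_mem hp hκ0 b) using 1
    rw [weightedShift_mul]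
    refine weightedShift_congr (by rw [hk, add_zero]) fun n => ?_
    rw [add_zero, ← mul_assoc, divIndicator_mul_self]
  · obtain rfl : b = l * m + a := by
      zify
      linarith
    convert mul_mem_sphericalSpan hp (weightedShift_zero_dunklPowWeight_mem hp hκ0 a)
      (weightedShift_neg_period_mul_dunklPowWeight_mem hp m) using 1
    rw [weightedShift_mul]
    refine weightedShift_congr (by push_cast; ring) fun n => ?_
    rw [dunklPowWeight_add, divIndicator_add_of_dvd (dvd_neg.2 (dvd_mul_right _ _)) n]
    push_cast
    rw [← sub_eq_add_neg]
    linear_combination (-(dunklPowWeight l κ (l * m) n * dunklPowWeight l κ a (n - l * m))) *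
      divIndicator_mul_self (l := l) n

theorem eIdem_zero_mul_pbwMonomial_mul_mem (hp : IsPrimitiveRoot ζ l) (hκ0 : κ 0 = 0)
    {ψ : ℤ → ℂ} (hψ : Periodic ψ l) (a b : ℕ) :
    eIdem l ζ 0 * pbwMonomial l κ a b ψ * eIdem l ζ 0 ∈ sphericalSpan l ζ κ := by
  rw [pbwMonomial, eIdem_zero_mul_weightedShift_mul hp]
  by_cases hab : (l : ℤ) ∣ a - b
  · have hψ0 : ∀ n, (l : ℤ) ∣ n → ψ n = ψ 0 := by
      rintro n ⟨k, rfl⟩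
      rw [mul_comm]
      exact hψ.int_mul_eq k
    convert Submodule.smul_mem _ (ψ 0) (weightedShift_sub_dunklPowWeight_mem hp hκ0 hab) using 1
    rw [smul_weightedShift]
    refine weightedShift_congr rfl fun n => ?_
    rw [divIndicator_add_of_dvd hab, Pi.smul_apply, smul_eq_mul]
    linear_combination dunklPowWeight l κ b n * divIndicator_mul_congr hψ0 n +
      ψ n * dunklPowWeight l κ b n * divIndicator_mul_self (l := l) n
  · convert zero_mem (sphericalSpan l ζ κ) using 1
    rw [← weightedShift_zero_right]
    refine weightedShift_congr rfl fun n => ?_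
    by_cases hn : (l : ℤ) ∣ n
    · have : ¬ (l : ℤ) ∣ n + (a - b) := fun h => hab ((dvd_add_right hn).1 h)
      simp [divIndicator, this]
    · simp [divIndicator, hn]

theorem eIdem_zero_mul_mul_mem_sphericalSpan (hp : IsPrimitiveRoot ζ l) (hκ0 : κ 0 = 0)
    {v : Module.End ℂ Lau} (hv : v ∈ pbwSpan l κ) :
    eIdem l ζ 0 * v * eIdem l ζ 0 ∈ sphericalSpan l ζ κ := by
  induction hv using Submodule.span_induction with
  | mem x hx =>
    obtain ⟨a, b, ψ, hψ, rfl⟩ := hx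
    exact eIdem_zero_mul_pbwMonomial_mul_mem hp hκ0 hψ a b
  | zero => simp
  | add x y _ _ hx hy => simpa only [mul_add, add_mul] using add_mem hx hy
  | smul c x _ hx => simpa only [mul_smul_comm, smul_mul_assoc] using Submodule.smul_mem _ c hx

end Spherical

end Cherednik

/-- Proposition 12(2): the spherical subalgebra
`e_0 H_κ e_0 = {e_0 ∘ h ∘ e_0 : h ∈ H_κ}` coincides with the ℂ-linear span of `e_0`
together with all (nonempty) finite products of the three operators
`e_0 ∘ Z^l ∘ e_0`, `e_0 ∘ Z ∘ ∂_κ ∘ e_0` and `e_0 ∘ ∂_κ^l ∘ e_0`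
(i.e. `e_0 H_κ e_0 ≅ ℂ[z, ∂_κ]^{ℤ/lℤ} = ℂ[z^l, z∂_κ, ∂_κ^l]`). -/
theorem spherical_subalgebra_generators (l : ℕ) [NeZero l] (ζ : ℂ)
    (hζ : ζ = Complex.exp (2 * Real.pi * Complex.I / l))
    (κ : Fin l → ℂ) (hκ0 : κ 0 = 0) :
    {w : Module.End ℂ Lau | ∃ h ∈ Cher l ζ κ, w = eIdem l ζ 0 * h * eIdem l ζ 0} =
      ↑(Submodule.span ℂ ({eIdem l ζ 0} ∪
        (Subsemigroup.closure
          {eIdem l ζ 0 * Zmul ^ l * eIdem l ζ 0,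
           eIdem l ζ 0 * Zmul * Dunkl l ζ κ * eIdem l ζ 0,
           eIdem l ζ 0 * (Dunkl l ζ κ) ^ l * eIdem l ζ 0} :
            Set (Module.End ℂ Lau)))) := by
  have hp : IsPrimitiveRoot ζ l := hζ ▸ Complex.isPrimitiveRoot_exp l (NeZero.ne l)
  have mem_Cher {x : Module.End ℂ Lau} (hx : x ∈ ({Zmul, Gam ζ, Dunkl l ζ κ} : Set _)) :
      x ∈ Cher l ζ κ := Algebra.subset_adjoin hx
  refine subset_antisymm ?_ ((Cherednik.isIdempotentElem_eIdem_zero hp).span_union_closure_subset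
    Cherednik.eIdem_zero_mem_Cher ?_)
  · rintro _ ⟨h, hh, rfl⟩
    exact Cherednik.eIdem_zero_mul_mul_mem_sphericalSpan hp hκ0 (Cherednik.Cher_le_pbwSpan hp hh)
  · rintro g (rfl | rfl | rfl)
    · exact ⟨_, pow_mem (mem_Cher (.inl rfl)) l, rfl⟩
    · exact ⟨_, mul_mem (mem_Cher (.inl rfl)) (mem_Cher (.inr (.inr rfl))),
        by rw [mul_assoc _ Zmul]⟩
    · exact ⟨_, pow_mem (mem_Cher (.inr (.inr rfl))) l, rfl⟩
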